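/- arXiv:1612.07535 — 2 statements merged into one kernel-verified Lean document; each statement's English description precedes it below -/
import Mathlib

section
/- Let A be a Hermitian m×m complex matrix and 1 < p < ∞ with conjugate exponent q = p/(p−1). Then A satisfies the L^p-dissipativity condition (there exists γ > 0 with |z|²·Re⟨w, Aw⟩ + (p−2)·Re⟨w, z⟩·Re⟨z, Aw⟩ ≥ γ·|z|²·|w|² for all z, w ∈ ℂ^m) if and only if A^H = A satisfies the corresponding L^q-dissipativity condition (there exists δ > 0 with |z|²·Re⟨w, A^H w⟩ + (q−2)·Re⟨w, z⟩·Re⟨z, A^H w⟩ ≥ δ·|z|²·|w|² for all z, w ∈ ℂ^m). -/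
open scoped BigOperators Matrix

/-- Standard Hermitian inner product on `ℂ^m`. -/
noncomputable def herm {m : ℕ} (u v : Fin m → ℂ) : ℂ :=
  ∑ i, (starRingEnd ℂ) (u i) * v i

/-- Euclidean norm on `ℂ^m`. -/
noncomputable def enorm' {m : ℕ} (u : Fin m → ℂ) : ℝ :=
  Real.sqrt (herm u u).re

lemma herm_self_re_nonneg {m : ℕ} (u : Fin m → ℂ) : 0 ≤ (herm u u).re := by
  rw [herm, Complex.re_sum]
  apply Finset.sum_nonneg
  intro i _
  simp [Complex.mul_re]
  nlinarith [sq_nonneg (u i).re, sq_nonneg (u i).im]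

lemma herm_self_re_pos {m : ℕ} {w : Fin m → ℂ} (hw : w ≠ 0) : 0 < (herm w w).re := by
  obtain ⟨i, hi⟩ := Function.ne_iff.mp hw
  rw [herm, Complex.re_sum]
  apply Finset.sum_pos' (fun j _ => by simp [Complex.mul_re]; nlinarith [sq_nonneg (w j).re, sq_nonneg (w j).im])
  refine ⟨i, Finset.mem_univ i, ?_⟩
  simp [Complex.mul_re]
  have := Complex.normSq_pos.mpr hi
  rw [Complex.normSq_apply] at this
  nlinarith

lemma enorm'_sq {m : ℕ} (u : Fin m → ℂ) : (enorm' u)^2 = (herm u u).re :=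
  Real.sq_sqrt (herm_self_re_nonneg u)

lemma herm_re_comm {m : ℕ} (u v : Fin m → ℂ) : (herm u v).re = (herm v u).re := by
  rw [herm, herm, Complex.re_sum, Complex.re_sum]
  congr 1; funext i
  simp [Complex.mul_re]; ring

lemma herm_add_left {m : ℕ} (z w v : Fin m → ℂ) :
    herm (z + w) v = herm z v + herm w v := by
  simp [herm, add_mul, Finset.sum_add_distrib]

lemma herm_add_right {m : ℕ} (v z w : Fin m → ℂ) :
    herm v (z + w) = herm v z + herm v w := by
  simp [herm, mul_add, Finset.sum_add_distrib]

lemma herm_smul_left {m : ℕ} (r : ℝ) (u v : Fin m → ℂ) :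
    herm ((r:ℂ) • u) v = (r:ℂ) * herm u v := by
  simp [herm, Finset.mul_sum, mul_assoc]

lemma herm_smul_right {m : ℕ} (r : ℝ) (u v : Fin m → ℂ) :
    herm u ((r:ℂ) • v) = (r:ℂ) * herm u v := by
  simp [herm, Finset.mul_sum]
  congr 1; funext i; ring

lemma herm_smul_left_re {m : ℕ} (r : ℝ) (u v : Fin m → ℂ) :
    (herm ((r:ℂ) • u) v).re = r * (herm u v).re := by
  rw [herm_smul_left]; simp

lemma herm_smul_right_re {m : ℕ} (r : ℝ) (u v : Fin m → ℂ) :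
    (herm u ((r:ℂ) • v)).re = r * (herm u v).re := by
  rw [herm_smul_right]; simp

lemma herm_add_smul_left_re {m : ℕ} (c : ℝ) (z w v : Fin m → ℂ) :
    (herm (z + (c:ℂ) • w) v).re = (herm z v).re + c * (herm w v).re := by
  rw [herm_add_left, herm_smul_left]; simp

lemma herm_add_smul_right_re {m : ℕ} (c : ℝ) (v z w : Fin m → ℂ) :
    (herm v (z + (c:ℂ) • w)).re = (herm v z).re + c * (herm v w).re := by
  rw [herm_add_right, herm_smul_right]; simp

lemma herm_self_expand_re {m : ℕ} (c : ℝ) (z w : Fin m → ℂ) :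
    (herm (z + (c:ℂ) • w) (z + (c:ℂ) • w)).re
      = (herm z z).re + 2*c*(herm w z).re + c^2*(herm w w).re := by
  rw [herm_add_smul_left_re, herm_add_smul_right_re, herm_add_smul_right_re,
    herm_re_comm z w]
  ring

lemma herm_cs {m : ℕ} (z w : Fin m → ℂ) (hn : 0 < (herm w w).re) :
    ((herm w z).re)^2 ≤ (herm z z).re * (herm w w).re := by
  set n := (herm w w).re
  set s := (herm w z).re with hs
  have h0 := herm_self_re_nonneg ((n:ℂ) • z + ((-s:ℝ):ℂ) • w)
  rw [herm_self_expand_re, herm_smul_left_re, herm_smul_right_re, herm_smul_right_re] at h0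
  nlinarith [h0, hn]

lemma arith (p q γ Z s n b B c : ℝ) (hp1 : 1 < p) (hq : q = p/(p-1)) (hγ : 0 < γ)
    (hZ : 0 ≤ Z) (hn : 0 < n) (hc : c = -(q*s)/n) (hcs : s^2 ≤ Z*n)
    (hH : γ * ((Z + 2*c*s + c^2*n) * n) ≤ (Z + 2*c*s + c^2*n) * b + (p-2)*(s + c*n)*(B + c*b)) :
    γ * min 1 ((q-1)^2) * (Z*n) ≤ Z*b + (q-2)*s*B := by
  have hp0 : (0:ℝ) < p - 1 := by linarith
  have hq1 : 1 < q := by rw [hq, lt_div_iff₀ hp0]; linarith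
  have hcn : c * n = -(q*s) := by rw [hc]; field_simp
  have hpq : (p-2)*(1-q) = q - 2 := by rw [hq]; field_simp; ring
  have hA1 : c^2*n = -(q*s)*c := by linear_combination c * hcn
  have hA2 : (p-2)*(s + c*n) = (q-2)*s := by linear_combination s*hpq + (p-2)*hcn
  have key1 : γ * ((Z + (2-q)*(c*s))*n) ≤ Z*b + (q-2)*s*B := by
    calc γ * ((Z + (2-q)*(c*s))*n)
        = γ * ((Z + 2*c*s + c^2*n)*n) := by linear_combination (-(γ*n))*hA1
      _ ≤ (Z + 2*c*s + c^2*n)*b + (p-2)*(s + c*n)*(B + c*b) := hH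
      _ = Z*b + (q-2)*s*B := by linear_combination b*hA1 + (B + c*b)*hA2
  have hun : c*s*n = -(q*s^2) := by linear_combination s*hcn
  have hZn : (0:ℝ) ≤ Z*n := mul_nonneg hZ hn.le
  have key2 : min 1 ((q-1)^2) * (Z*n) ≤ (Z + (2-q)*(c*s))*n := by
    have e : (Z + (2-q)*(c*s))*n = Z*n - (2-q)*q*s^2 := by linear_combination (2-q)*hun
    rw [e]
    rcases le_total q 2 with h2 | h2
    · have h3 : (2-q)*q*s^2 ≤ (2-q)*q*(Z*n) := by
        apply mul_le_mul_of_nonneg_left hcs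
        nlinarith
      have h4 : min 1 ((q-1)^2)*(Z*n) ≤ (q-1)^2*(Z*n) :=
        mul_le_mul_of_nonneg_right (min_le_right _ _) hZn
      nlinarith
    · have h3 : (0:ℝ) ≤ (q-2)*q*s^2 :=
        mul_nonneg (mul_nonneg (by linarith) (by linarith)) (sq_nonneg s)
      have h4 : min 1 ((q-1)^2)*(Z*n) ≤ 1*(Z*n) :=
        mul_le_mul_of_nonneg_right (min_le_left _ _) hZn
      nlinarith
  calc γ * min 1 ((q-1)^2) * (Z*n) = γ * (min 1 ((q-1)^2) * (Z*n)) := by ring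
    _ ≤ γ * ((Z + (2-q)*(c*s))*n) := mul_le_mul_of_nonneg_left key2 hγ.le
    _ ≤ Z*b + (q-2)*s*B := key1

lemma key {m : ℕ} (A : Matrix (Fin m) (Fin m) ℂ) (p q : ℝ) (hp1 : 1 < p) (hq : q = p / (p - 1))
    (h : ∃ γ > (0:ℝ), ∀ z w : Fin m → ℂ,
      γ * ((enorm' z)^2 * (enorm' w)^2) ≤
        (enorm' z)^2 * (herm w (A.mulVec w)).re
          + (p - 2) * (herm w z).re * (herm z (A.mulVec w)).re) :
    ∃ δ > (0:ℝ), ∀ z w : Fin m → ℂ,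
      δ * ((enorm' z)^2 * (enorm' w)^2) ≤
        (enorm' z)^2 * (herm w (A.mulVec w)).re
          + (q - 2) * (herm w z).re * (herm z (A.mulVec w)).re := by
  obtain ⟨γ, hγ, H⟩ := h
  have hp0 : (0:ℝ) < p - 1 := by linarith
  have hq1 : 1 < q := by rw [hq, lt_div_iff₀ hp0]; linarith
  refine ⟨γ * min 1 ((q-1)^2),
    mul_pos hγ (lt_min one_pos (pow_pos (by linarith) 2)), ?_⟩
  intro z w
  by_cases hw : w = 0
  · subst hw
    have hz : herm (0 : Fin m → ℂ) (A.mulVec 0) = 0 := by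
      simp [herm, Matrix.mulVec_zero]
    have hz2 : ∀ x : Fin m → ℂ, herm (0 : Fin m → ℂ) x = 0 := by
      intro x; simp [herm]
    have he : enorm' (0 : Fin m → ℂ) = 0 := by simp [enorm', herm]
    rw [he, hz2]
    simp [Matrix.mulVec_zero, herm]
  · have hn : 0 < (herm w w).re := herm_self_re_pos hw
    set Z := (herm z z).re
    set s := (herm w z).re
    set n := (herm w w).re
    set b := (herm w (A.mulVec w)).re
    set B := (herm z (A.mulVec w)).re
    set c : ℝ := -(q*s)/n with hc
    have hH := H (z + (c:ℂ) • w) w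
    simp only [enorm'_sq] at hH ⊢
    rw [herm_self_expand_re, herm_add_smul_right_re, herm_add_smul_left_re] at hH
    have hcs : s^2 ≤ Z*n := herm_cs z w hn
    exact arith p q γ Z s n b B c hp1 hq hγ (herm_self_re_nonneg z) hn hc hcs hH

/-- For a Hermitian matrix `A`, the `L^p`-dissipativity condition holds iff the
`L^q`-dissipativity condition for `Aᴴ = A` holds, where `q = p/(p-1)`. -/
theorem stmt3 {m : ℕ} (A : Matrix (Fin m) (Fin m) ℂ) (hA : A.IsHermitian)
    (p q : ℝ) (hp1 : 1 < p) (hq : q = p / (p - 1)) :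
    (∃ γ > (0:ℝ), ∀ z w : Fin m → ℂ,
      γ * ((enorm' z)^2 * (enorm' w)^2) ≤
        (enorm' z)^2 * (herm w (A.mulVec w)).re
          + (p - 2) * (herm w z).re * (herm z (A.mulVec w)).re) ↔
    (∃ δ > (0:ℝ), ∀ z w : Fin m → ℂ,
      δ * ((enorm' z)^2 * (enorm' w)^2) ≤
        (enorm' z)^2 * (herm w (Aᴴ.mulVec w)).re
          + (q - 2) * (herm w z).re * (herm z (Aᴴ.mulVec w)).re) := by
  have hAe : Aᴴ = A := hA
  have hp0 : (0:ℝ) < p - 1 := by linarith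
  have hq1 : 1 < q := by rw [hq, lt_div_iff₀ hp0]; linarith
  have hqp : q * (p - 1) = p := by rw [hq]; field_simp
  have hp' : p = q / (q - 1) := by
    rw [eq_div_iff (by linarith : q - 1 ≠ 0)]
    linear_combination hqp
  rw [hAe]
  constructor
  · exact key A p q hp1 hq
  · exact key A q p hq1 hp'
end

section
/- Let f : ℝ^m → ℝ^m be C¹, S ∈ ℝ^{d,d}, A ∈ ℝ^{m,m}, and let v⋆ ∈ C³(ℝ^d, ℝ^m) be a classical solution of A·Δv⋆(x) + ⟨Sx, ∇v⋆(x)⟩ + f(v⋆(x)) = 0 on ℝ^d. Suppose λ ∈ ℂ, E ∈ ℂ^{d,d} and b ∈ ℂ^d satisfy λE = ES − SE and λb = −Sb. Then the function v(x) = (Dv⋆(x))(Ex + b) is a classical solution of the eigenvalue problem λ v(x) = A·Δv(x) + ⟨Sx, ∇v(x)⟩ + Df(v⋆(x))·v(x) on ℝ^d. -/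
/-!
Apply the derivation `u ↦ Du(x)(Ex + b)` along the affine vector field `x ↦ Ex + b` to the
rotating wave equation. Since `E` is skew, this derivation commutes with the Laplacian: the two
mixed terms `∑ᵢⱼ ∂ᵢ∂ⱼu Eⱼᵢ` it produces cancel. By the chain rule it turns `f(v⋆)` into
`Df(v⋆) v`. Its commutator with the drift `⟨Sx, ∇·⟩` is `Dv⋆(x)(ESx − S(Ex + b))`, and the
relations `λE = ES − SE`, `λb = −Sb` say precisely that `ESx − S(Ex + b) = λ(Ex + b)`, so the
commutator contributes `λv`.
-/

open scoped BigOperators Matrix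

/-- Partial derivative in the `i`-th coordinate direction. -/
noncomputable def pd {d : ℕ} {F : Type*} [NormedAddCommGroup F] [NormedSpace ℝ F]
    (i : Fin d) (g : (Fin d → ℝ) → F) (x : Fin d → ℝ) : F :=
  fderiv ℝ g x (Pi.single i 1)

section PartialDerivative

variable {d : ℕ} {F G : Type*} [NormedAddCommGroup F] [NormedSpace ℝ F]
  [NormedAddCommGroup G] [NormedSpace ℝ G] {g h : (Fin d → ℝ) → F} {x : Fin d → ℝ}

theorem contDiff_pd {n m : WithTop ℕ∞} (hg : ContDiff ℝ n g) (hmn : m + 1 ≤ n) (i : Fin d) :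
    ContDiff ℝ m (pd i g) := by
  unfold pd
  exact (ContinuousLinearMap.apply ℝ F (Pi.single i 1)).contDiff.comp (hg.fderiv_right hmn)

theorem pd_const (c : F) (i : Fin d) : pd i (fun _ => c) x = 0 := by
  simp [pd]

theorem pd_add (hg : DifferentiableAt ℝ g x) (hh : DifferentiableAt ℝ h x) (i : Fin d) :
    pd i (fun z => g z + h z) x = pd i g x + pd i h x := by
  simp [pd, fderiv_fun_add hg hh]

theorem pd_sum {ι : Type*} {s : Finset ι} {g : ι → (Fin d → ℝ) → F}
    (hg : ∀ j ∈ s, DifferentiableAt ℝ (g j) x) (i : Fin d) :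
    pd i (fun z => ∑ j ∈ s, g j z) x = ∑ j ∈ s, pd i (g j) x := by
  simp [pd, fderiv_fun_sum hg]

theorem pd_smul {r : (Fin d → ℝ) → ℝ} (hr : DifferentiableAt ℝ r x)
    (hg : DifferentiableAt ℝ g x) (i : Fin d) :
    pd i (fun z => r z • g z) x = pd i r x • g x + r x • pd i g x := by
  simp [pd, fderiv_fun_smul hr hg, add_comm]

theorem pd_mul {𝔸 : Type*} [NormedRing 𝔸] [NormedAlgebra ℝ 𝔸] {g h : (Fin d → ℝ) → 𝔸}
    (hg : DifferentiableAt ℝ g x) (hh : DifferentiableAt ℝ h x) (i : Fin d) :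
    pd i (fun z => g z * h z) x = pd i g x * h x + g x * pd i h x := by
  simp [pd, fderiv_fun_mul' hg hh, add_comm]

theorem pd_const_mul {𝔸 : Type*} [NormedRing 𝔸] [NormedAlgebra ℝ 𝔸] {g : (Fin d → ℝ) → 𝔸}
    (hg : DifferentiableAt ℝ g x) (c : 𝔸) (i : Fin d) :
    pd i (fun z => c * g z) x = c * pd i g x := by
  simp [pd, fderiv_const_mul hg]

theorem pd_comp {E : Type*} [NormedAddCommGroup E] [NormedSpace ℝ E] {g : E → F}
    {φ : (Fin d → ℝ) → E} (hg : DifferentiableAt ℝ g (φ x)) (hφ : DifferentiableAt ℝ φ x)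
    (i : Fin d) : pd i (fun z => g (φ z)) x = fderiv ℝ g (φ x) (pd i φ x) :=
  congrArg (· (Pi.single i 1)) (fderiv_comp x hg hφ)

theorem pd_clm_comp (L : F →L[ℝ] G) (hg : DifferentiableAt ℝ g x) (i : Fin d) :
    pd i (fun z => L (g z)) x = L (pd i g x) := by
  rw [pd_comp L.differentiableAt hg, L.fderiv]

theorem pd_ofReal {g : (Fin d → ℝ) → ℝ} (hg : DifferentiableAt ℝ g x) (i : Fin d) :
    pd i (fun z => (g z : ℂ)) x = ((pd i g x : ℝ) : ℂ) :=
  pd_clm_comp Complex.ofRealCLM hg i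

theorem pd_apply {ι : Type*} [Fintype ι] {φ : (Fin d → ℝ) → ι → F} (hφ : DifferentiableAt ℝ φ x)
    (l : ι) (i : Fin d) : pd i (fun z => φ z l) x = pd i φ x l := by
  simp [pd, fderiv_apply hφ]

theorem pd_ofReal_apply (i l : Fin d) :
    pd i (fun z : Fin d → ℝ => ((z l : ℝ) : ℂ)) x = ((Pi.single i 1 : Fin d → ℝ) l : ℂ) := by
  rw [pd_ofReal (differentiableAt_apply l x), pd_apply (φ := fun z => z) differentiableAt_id, pd,
    fderiv_fun_id]
  rfl

theorem pd_comm (hg : ContDiff ℝ 2 g) (i j : Fin d) : pd i (pd j g) x = pd j (pd i g) x := by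
  have hd : DifferentiableAt ℝ (fderiv ℝ g) x :=
    (hg.fderiv_right (le_refl _)).differentiable one_ne_zero x
  have h : ∀ i j : Fin d,
      pd i (pd j g) x = fderiv ℝ (fderiv ℝ g) x (Pi.single i 1) (Pi.single j 1) := fun i j => by
      change pd i (fun y => ContinuousLinearMap.apply ℝ F (Pi.single j 1) (fderiv ℝ g y)) x = _
      rw [pd_clm_comp _ hd]
      rfl
  rw [h, h]
  exact hg.contDiffAt.isSymmSndFDerivAt (by simp) _ _

end PartialDerivative

section Operators

variable {d : ℕ} {F : Type*} [NormedAddCommGroup F] [NormedSpace ℝ F] {u : (Fin d → ℝ) → F}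
  {x : Fin d → ℝ}

noncomputable def lap (u : (Fin d → ℝ) → F) (x : Fin d → ℝ) : F :=
  ∑ i, pd i (pd i u) x

noncomputable def drift (S : Matrix (Fin d) (Fin d) ℝ) (u : (Fin d → ℝ) → F) (x : Fin d → ℝ) : F :=
  ∑ i, (S *ᵥ x) i • pd i u x

theorem contDiff_lap {n m : WithTop ℕ∞} (hu : ContDiff ℝ n u) (hmn : m + 2 ≤ n) :
    ContDiff ℝ m (lap u) := by
  have hmn' : m + 1 + 1 ≤ n := by rwa [add_assoc, one_add_one_eq_two]
  unfold lap
  exact ContDiff.sum fun i _ => contDiff_pd (contDiff_pd hu hmn' i) le_rfl i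

theorem contDiff_drift {n m : WithTop ℕ∞} (S : Matrix (Fin d) (Fin d) ℝ) (hu : ContDiff ℝ n u)
    (hmn : m + 1 ≤ n) : ContDiff ℝ m (drift S u) := by
  unfold drift
  simp only [Matrix.mulVec, dotProduct]
  have hpd := fun i => contDiff_pd hu hmn i
  fun_prop

theorem differentiable_mulVec (S : Matrix (Fin d) (Fin d) ℝ) :
    Differentiable ℝ (fun z : Fin d → ℝ => S *ᵥ z) :=
  S.mulVecLin.toContinuousLinearMap.differentiable

theorem pd_mulVec_apply (S : Matrix (Fin d) (Fin d) ℝ) (i j : Fin d) :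
    pd j (fun z => (S *ᵥ z) i) x = S i j := by
  rw [pd_apply (differentiable_mulVec S x), pd,
    show (fun z : Fin d → ℝ => S *ᵥ z) = S.mulVecLin.toContinuousLinearMap from rfl,
    ContinuousLinearMap.fderiv]
  simp [Matrix.mulVec_single]

theorem pd_drift (S : Matrix (Fin d) (Fin d) ℝ) (hu : ContDiff ℝ 2 u) (j : Fin d) :
    pd j (drift S u) x = ∑ i, (S i j • pd i u x + (S *ᵥ x) i • pd j (pd i u) x) := by
  have hr : ∀ i, DifferentiableAt ℝ (fun z => (S *ᵥ z) i) x := fun i =>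
    differentiableAt_pi.1 (differentiable_mulVec S x) i
  have hpd : ∀ i, DifferentiableAt ℝ (pd i u) x := fun i =>
    (contDiff_pd (m := 1) hu (by norm_num) i).differentiable one_ne_zero x
  unfold drift
  rw [pd_sum (g := fun i z => (S *ᵥ z) i • pd i u z) fun i _ => (hr i).smul (hpd i)]
  simp only [pd_smul (hr _) (hpd _), pd_mulVec_apply]

theorem lap_ofReal {g : (Fin d → ℝ) → ℝ} (hg : ContDiff ℝ 2 g) :
    lap (fun z => (g z : ℂ)) x = ((lap g x : ℝ) : ℂ) := by
  have hpd : ∀ i, pd i (fun z => (g z : ℂ)) = fun z => ((pd i g z : ℝ) : ℂ) := fun i =>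
    funext fun z => pd_ofReal (hg.differentiable (by norm_num) z) i
  simp only [lap, hpd, pd_ofReal ((contDiff_pd (m := 1) hg (by norm_num) _).differentiable
    one_ne_zero x), Complex.ofReal_sum]

theorem drift_ofReal (S : Matrix (Fin d) (Fin d) ℝ) {g : (Fin d → ℝ) → ℝ}
    (hg : DifferentiableAt ℝ g x) :
    drift S (fun z => (g z : ℂ)) x = ((drift S g x : ℝ) : ℂ) := by
  simp only [drift, pd_ofReal hg, Complex.real_smul, smul_eq_mul, Complex.ofReal_sum,
    Complex.ofReal_mul]

end Operators

theorem Matrix.mulVec_sub_mulVec_affine_eq_smul {R n : Type*} [CommRing R] [Fintype n]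
    {E S : Matrix n n R} {b : n → R} {lam : R} (hE : lam • E = E * S - S * E)
    (hb : lam • b = -(S *ᵥ b)) (y : n → R) :
    E *ᵥ (S *ᵥ y) - S *ᵥ (E *ᵥ y + b) = lam • (E *ᵥ y + b) := by
  rw [smul_add, ← Matrix.smul_mulVec, hE, hb, Matrix.sub_mulVec, Matrix.mulVec_add,
    Matrix.mulVec_mulVec, Matrix.mulVec_mulVec]
  abel

theorem sum_sum_add_swap_mul_eq_zero {R : Type*} [CommRing R] {n : Type*} [Fintype n]
    {E : Matrix n n R} (hE : Eᵀ = -E) (H : n → n → R) :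
    ∑ i, ∑ j, (H j i + H i j) * E j i = 0 := by
  have hskew : ∀ i j, E j i = -E i j := fun i j => by simpa using congrFun (congrFun hE i) j
  have hswap : ∑ i, ∑ j, H i j * E j i = -∑ i, ∑ j, H j i * E j i := by
    rw [Finset.sum_comm, ← Finset.sum_neg_distrib]
    refine Finset.sum_congr rfl fun i _ => ?_
    rw [← Finset.sum_neg_distrib]
    exact Finset.sum_congr rfl fun j _ => by rw [hskew, mul_neg]
  simp only [add_mul, Finset.sum_add_distrib, hswap, add_neg_cancel]

section AffineField

variable {d : ℕ} (E : Matrix (Fin d) (Fin d) ℂ) (b : Fin d → ℂ) {u v : (Fin d → ℝ) → ℂ}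
  {x : Fin d → ℝ}

noncomputable def derivAlongAffine (u : (Fin d → ℝ) → ℂ) (x : Fin d → ℝ) : ℂ :=
  ∑ j, pd j u x * (E *ᵥ (fun l => (x l : ℂ)) + b) j

theorem differentiable_affine_apply (j : Fin d) :
    Differentiable ℝ (fun z : Fin d → ℝ => (E *ᵥ (fun l => (z l : ℂ)) + b) j) := by
  simp only [Pi.add_apply, Matrix.mulVec, dotProduct]
  fun_prop

theorem pd_affine_apply (i j : Fin d) :
    pd i (fun z : Fin d → ℝ => (E *ᵥ (fun l => (z l : ℂ)) + b) j) x = E j i := by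
  have hcoord : ∀ l, DifferentiableAt ℝ (fun z : Fin d → ℝ => ((z l : ℝ) : ℂ)) x := fun l => by
    fun_prop
  simp only [Pi.add_apply, Matrix.mulVec, dotProduct]
  rw [pd_add (by fun_prop) (differentiableAt_const _), pd_const, add_zero,
    pd_sum (g := fun l z => E j l * ((z l : ℝ) : ℂ)) fun l _ => by fun_prop]
  simp [pd_const_mul (hcoord _), pd_ofReal_apply, Pi.single_apply, apply_ite]

theorem differentiable_derivAlongAffine (hu : ContDiff ℝ 2 u) :
    Differentiable ℝ (derivAlongAffine E b u) := fun y =>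
  DifferentiableAt.fun_sum fun j _ =>
    ((contDiff_pd (m := 1) hu (by norm_num) j).differentiable one_ne_zero y).mul
      (differentiable_affine_apply E b j y)

theorem derivAlongAffine_const (c : ℂ) : derivAlongAffine E b (fun _ => c) x = 0 := by
  simp [derivAlongAffine, pd_const]

theorem derivAlongAffine_add (hu : DifferentiableAt ℝ u x) (hv : DifferentiableAt ℝ v x) :
    derivAlongAffine E b (fun z => u z + v z) x
      = derivAlongAffine E b u x + derivAlongAffine E b v x := by
  simp only [derivAlongAffine, pd_add hu hv, add_mul, Finset.sum_add_distrib]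

theorem derivAlongAffine_sum {ι : Type*} {s : Finset ι} {u : ι → (Fin d → ℝ) → ℂ}
    (hu : ∀ l ∈ s, DifferentiableAt ℝ (u l) x) :
    derivAlongAffine E b (fun z => ∑ l ∈ s, u l z) x = ∑ l ∈ s, derivAlongAffine E b (u l) x := by
  simp only [derivAlongAffine, pd_sum hu, Finset.sum_mul]
  exact Finset.sum_comm

theorem derivAlongAffine_const_mul (c : ℂ) (hu : DifferentiableAt ℝ u x) :
    derivAlongAffine E b (fun z => c * u z) x = c * derivAlongAffine E b u x := by
  simp only [derivAlongAffine, pd_const_mul hu, Finset.mul_sum, mul_assoc]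

theorem derivAlongAffine_linear_combination {ι : Type*} {s : Finset ι} {a : ι → ℂ}
    {U : ι → (Fin d → ℝ) → ℂ} (h : ∀ z, ∑ l ∈ s, a l * U l z + u z + v z = 0)
    (hU : ∀ l ∈ s, DifferentiableAt ℝ (U l) x)
    (hu : DifferentiableAt ℝ u x) (hv : DifferentiableAt ℝ v x) :
    ∑ l ∈ s, a l * derivAlongAffine E b (U l) x + derivAlongAffine E b u x
      + derivAlongAffine E b v x = 0 := by
  have hsum : DifferentiableAt ℝ (fun z => ∑ l ∈ s, a l * U l z) x :=
    DifferentiableAt.fun_sum fun l hl => (hU l hl).const_mul (a l)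
  have h0 := derivAlongAffine_const E b (x := x) 0
  rw [← funext h, derivAlongAffine_add E b (u := fun z => ∑ l ∈ s, a l * U l z + u z)
      (hsum.add hu) hv, derivAlongAffine_add E b hsum hu,
    derivAlongAffine_sum E b fun l hl => (hU l hl).const_mul (a l)] at h0
  rwa [Finset.sum_congr rfl fun l hl => derivAlongAffine_const_mul E b (a l) (hU l hl)] at h0

theorem pd_derivAlongAffine (hu : ContDiff ℝ 2 u) (i : Fin d) (y : Fin d → ℝ) :
    pd i (derivAlongAffine E b u) y
      = derivAlongAffine E b (pd i u) y + ∑ j, pd j u y * E j i := by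
  have hpd : ∀ j, DifferentiableAt ℝ (pd j u) y := fun j =>
    (contDiff_pd (m := 1) hu (by norm_num) j).differentiable one_ne_zero y
  have hc := fun j => differentiable_affine_apply E b j y
  unfold derivAlongAffine
  rw [← Finset.sum_add_distrib,
    pd_sum (g := fun j z => pd j u z * (E *ᵥ (fun l => (z l : ℂ)) + b) j)
      fun j _ => (hpd j).mul (hc j)]
  refine Finset.sum_congr rfl fun j _ => ?_
  rw [pd_mul (hpd j) (hc j), pd_affine_apply, pd_comm hu i j]

theorem lap_derivAlongAffine (hE : Eᵀ = -E) (hu : ContDiff ℝ 3 u) :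
    lap (derivAlongAffine E b u) x = derivAlongAffine E b (lap u) x := by
  have hu2 : ContDiff ℝ 2 u := hu.of_le (by norm_num)
  have hpd : ∀ i, ContDiff ℝ 2 (pd i u) := fun i => contDiff_pd hu (by norm_num) i
  have hpd1 : ∀ i, Differentiable ℝ (pd i u) := fun i => (hpd i).differentiable (by norm_num)
  have hpd2 : ∀ i j, Differentiable ℝ (pd i (pd j u)) := fun i j =>
    (contDiff_pd (m := 1) (hpd j) (by norm_num) i).differentiable one_ne_zero
  have hcross : ∀ i, pd i (fun y => ∑ j, pd j u y * E j i) x = ∑ j, pd i (pd j u) x * E j i := by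
    intro i
    rw [pd_sum (g := fun j y => pd j u y * E j i) fun j _ => (hpd1 j x).mul_const _]
    simp only [mul_comm _ (E _ i), pd_const_mul (hpd1 _ x)]
  have hsecond : ∀ i, pd i (pd i (derivAlongAffine E b u)) x
      = derivAlongAffine E b (pd i (pd i u)) x
        + ∑ j, (pd j (pd i u) x + pd i (pd j u) x) * E j i := by
    intro i
    rw [funext (pd_derivAlongAffine E b hu2 i),
      pd_add (differentiable_derivAlongAffine E b (hpd i) x)
        (DifferentiableAt.fun_sum fun j _ => (hpd1 j x).mul_const _),
      pd_derivAlongAffine E b (hpd i), hcross, add_assoc, ← Finset.sum_add_distrib]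
    simp only [add_mul]
  have hlap : derivAlongAffine E b (lap u) x = ∑ i, derivAlongAffine E b (pd i (pd i u)) x :=
    derivAlongAffine_sum E b fun i _ => hpd2 i i x
  rw [hlap, lap, Finset.sum_congr rfl fun i _ => hsecond i, Finset.sum_add_distrib,
    sum_sum_add_swap_mul_eq_zero hE, add_zero]

theorem drift_derivAlongAffine (S : Matrix (Fin d) (Fin d) ℝ) (hu : ContDiff ℝ 2 u) :
    drift S (derivAlongAffine E b u) x = derivAlongAffine E b (drift S u) x
      + ∑ j, pd j u x * (E *ᵥ (S.map Complex.ofReal *ᵥ (fun l => (x l : ℂ)))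
          - S.map Complex.ofReal *ᵥ (E *ᵥ (fun l => (x l : ℂ)) + b)) j := by
  have hSx : S.map Complex.ofReal *ᵥ (fun l => (x l : ℂ)) = fun i => ((S *ᵥ x) i : ℂ) :=
    funext fun i => (RingHom.map_mulVec Complex.ofRealHom S x i).symm
  simp only [drift, derivAlongAffine, pd_derivAlongAffine E b hu, pd_drift S hu, hSx]
  generalize E *ᵥ (fun l => (x l : ℂ)) + b = c
  generalize S *ᵥ x = s
  simp only [Complex.real_smul, Pi.sub_apply, Matrix.mulVec, dotProduct, Matrix.map_apply,
    mul_add, add_mul, mul_sub, Finset.mul_sum, Finset.sum_mul, Finset.sum_add_distrib,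
    Finset.sum_sub_distrib]
  have hP : ∑ a, ∑ i, (s a : ℂ) * (pd i (pd a u) x * c i)
      = ∑ a, ∑ i, (s i : ℂ) * pd a (pd i u) x * c a :=
    Finset.sum_comm.trans <| Finset.sum_congr rfl fun _ _ => Finset.sum_congr rfl fun _ _ => by ring
  have hEs : ∑ a, ∑ i, (s a : ℂ) * (pd i u x * E i a) = ∑ a, ∑ i, pd a u x * (E a i * s i) :=
    Finset.sum_comm.trans <| Finset.sum_congr rfl fun _ _ => Finset.sum_congr rfl fun _ _ => by ring
  have hS : ∑ a, ∑ i, (S i a : ℂ) * pd i u x * c a = ∑ a, ∑ i, pd a u x * (S a i * c i) :=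
    Finset.sum_comm.trans <| Finset.sum_congr rfl fun _ _ => Finset.sum_congr rfl fun _ _ => by ring
  rw [hP, hEs, hS]
  ring

theorem derivAlongAffine_drift_of_eigen (S : Matrix (Fin d) (Fin d) ℝ) {lam : ℂ}
    (hE : lam • E = E * S.map Complex.ofReal - S.map Complex.ofReal * E)
    (hb : lam • b = -(S.map Complex.ofReal *ᵥ b)) (hu : ContDiff ℝ 2 u) :
    derivAlongAffine E b (drift S u) x
      = drift S (derivAlongAffine E b u) x - lam * derivAlongAffine E b u x := by
  rw [eq_sub_iff_add_eq, drift_derivAlongAffine E b S hu,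
    Matrix.mulVec_sub_mulVec_affine_eq_smul hE hb]
  simp only [derivAlongAffine, Pi.smul_apply, smul_eq_mul, Finset.mul_sum, mul_left_comm]

theorem derivAlongAffine_ofReal_comp {m : ℕ} {g : (Fin m → ℝ) → ℝ}
    {φ : (Fin d → ℝ) → Fin m → ℝ} (hg : DifferentiableAt ℝ g (φ x))
    (hφ : DifferentiableAt ℝ φ x) :
    derivAlongAffine E b (fun z => (g (φ z) : ℂ)) x
      = ∑ l, (fderiv ℝ g (φ x) (Pi.single l 1) : ℂ)
          * derivAlongAffine E b (fun z => (φ z l : ℂ)) x := by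
  have hchain : ∀ j, pd j (fun z => (g (φ z) : ℂ)) x
      = ∑ l, (fderiv ℝ g (φ x) (Pi.single l 1) : ℂ) * pd j (fun z => (φ z l : ℂ)) x := by
    intro j
    rw [pd_ofReal (g := fun z => g (φ z)) (hg.comp x hφ), pd_comp hg hφ,
      pi_eq_sum_univ' (pd j φ x), map_sum]
    push_cast
    refine Finset.sum_congr rfl fun l _ => ?_
    rw [map_smul, smul_eq_mul, pd_ofReal (differentiableAt_pi.1 hφ l), pd_apply hφ,
      Complex.ofReal_mul, mul_comm]
  simp only [derivAlongAffine, hchain, Finset.sum_mul, Finset.mul_sum, mul_assoc]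
  exact Finset.sum_comm

end AffineField

/-- If `v⋆` is a classical solution of the rotating wave equation
`AΔv⋆ + ⟨Sx,∇v⋆⟩ + f(v⋆) = 0`, and `(λ, E, b)` satisfies `λE = ES - SE`,
`λb = -Sb`, then `v(x) = (Dv⋆(x))(Ex + b)` is a classical solution of
the eigenvalue problem `λ v = AΔv + ⟨Sx,∇v⟩ + Df(v⋆)v`. -/
theorem stmt8 {d m : ℕ}
    (f : (Fin m → ℝ) → (Fin m → ℝ)) (hf : ContDiff ℝ 1 f)
    (S : Matrix (Fin d) (Fin d) ℝ) (A : Matrix (Fin m) (Fin m) ℝ)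
    (vstar : (Fin d → ℝ) → (Fin m → ℝ)) (hvstar : ContDiff ℝ 3 vstar)
    (hwave : ∀ x : Fin d → ℝ,
      A.mulVec (fun k => ∑ i, pd i (fun y => pd i (fun z => vstar z k) y) x)
        + (fun k => ∑ i, (∑ j, S i j * x j) * pd i (fun z => vstar z k) x)
        + f (vstar x) = 0)
    (lam : ℂ) (E : Matrix (Fin d) (Fin d) ℂ) (b : Fin d → ℂ)
    (hEskew : Eᵀ = -E)
    (hE : lam • E = E * (S.map Complex.ofReal) - (S.map Complex.ofReal) * E)
    (hb : lam • b = -((S.map Complex.ofReal).mulVec b))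
    (v : (Fin d → ℝ) → (Fin m → ℂ))
    (hvdef : ∀ (x : Fin d → ℝ) (k : Fin m),
      v x k = ∑ j, pd j (fun z => (vstar z k : ℂ)) x
        * (E.mulVec (fun l => (x l : ℂ)) + b) j) :
    ∀ x : Fin d → ℝ,
      lam • v x
        = (A.map Complex.ofReal).mulVec
            (fun k => ∑ i, pd i (fun y => pd i (fun z => v z k) y) x)
          + (fun k => ∑ i, ((∑ j, S i j * x j : ℝ) : ℂ) * pd i (fun z => v z k) x)
          + (fun k => ∑ l, ((fderiv ℝ (fun u => f u k) (vstar x) (Pi.single l 1) : ℝ) : ℂ)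
              * v x l) := by
  intro x
  have hvl : ∀ l, ContDiff ℝ 3 (fun z => vstar z l) := fun l => contDiff_pi.1 hvstar l
  have hw : ∀ l, ContDiff ℝ 3 (fun z => ((vstar z l : ℝ) : ℂ)) := fun l =>
    Complex.ofRealCLM.contDiff.comp (hvl l)
  have hv : ∀ l, derivAlongAffine E b (fun z => ((vstar z l : ℝ) : ℂ)) = fun z => v z l :=
    fun l => funext fun z => (hvdef z l).symm
  have hfk : ∀ k, Differentiable ℝ (fun u => f u k) := fun k =>
    differentiable_pi.1 (hf.differentiable one_ne_zero) k
  have hwaveC : ∀ k z, ∑ l, (A k l : ℂ) * lap (fun z => ((vstar z l : ℝ) : ℂ)) z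
      + drift S (fun z => ((vstar z k : ℝ) : ℂ)) z + ((f (vstar z) k : ℝ) : ℂ) = 0 := by
    intro k z
    have h : ∑ l, A k l * lap (fun z => vstar z l) z + drift S (fun z => vstar z k) z
        + f (vstar z) k = 0 := congrFun (hwave z) k
    rw [drift_ofReal S ((hvl k).differentiable (by norm_num) z)]
    simp only [lap_ofReal ((hvl _).of_le (by norm_num))]
    exact_mod_cast h
  funext k
  have hkey := derivAlongAffine_linear_combination E b (hwaveC k)
    (fun l _ => (contDiff_lap (m := 1) (hw l) (by norm_num)).differentiable one_ne_zero x)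
    ((contDiff_drift (m := 1) S (hw k) (by norm_num)).differentiable one_ne_zero x)
    (Complex.ofRealCLM.differentiableAt.comp x
      ((hfk k).comp (hvstar.differentiable (by norm_num)) x))
  rw [derivAlongAffine_ofReal_comp E b (hfk k _) (hvstar.differentiable (by norm_num) x),
    derivAlongAffine_drift_of_eigen E b S hE hb ((hw k).of_le (by norm_num))] at hkey
  simp only [← lap_derivAlongAffine E b hEskew (hw _), hv] at hkey
  simp only [Pi.add_apply, Pi.smul_apply, smul_eq_mul, Matrix.mulVec, dotProduct, Matrix.map_apply]
  simp only [lap, drift, Complex.real_smul, Matrix.mulVec, dotProduct] at hkey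
  linear_combination -hkey
end
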